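/- arXiv:1811.08237 — 4 statements merged into one kernel-verified Lean document; each statement's English description precedes it below -/
import Mathlib

section
/- Let k be a field and R a reduced finite-dimensional commutative k-algebra. Then for every z ∈ R, the minimal polynomial of the multiplication-by-z endomorphism m_z : R → R is squarefree in k̄[X], where k̄ is an algebraic closure of k. -/
/-- For a reduced finite-dimensional commutative algebra over a field,
the minimal polynomial of any element is squarefree. -/
theorem minpoly_squarefree_of_reduced
    (k R : Type*) [Field k] [CommRing R] [Algebra k R]
    [FiniteDimensional k R] [IsReduced R] (z : R) :
    Squarefree (minpoly k z) := by
  have hint : IsIntegral k z := Algebra.IsIntegral.isIntegral z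
  have hne : minpoly k z ≠ 0 := minpoly.ne_zero hint
  intro x hx
  by_contra hxu
  obtain ⟨c, hc⟩ := hx
  have hx0 : x ≠ 0 := by rintro rfl; simp at hc; exact hne hc
  have hc0 : c ≠ 0 := by rintro rfl; simp at hc; exact hne hc
  have hy : (Polynomial.aeval z (x * c)) ^ 2 = 0 := by
    have h : (x * c) ^ 2 = minpoly k z * c := by rw [hc]; ring
    rw [← map_pow, h, map_mul, minpoly.aeval, zero_mul]
  have hy0 : Polynomial.aeval z (x * c) = 0 := IsReduced.eq_zero _ ⟨2, hy⟩
  have hdvd : minpoly k z ∣ x * c := minpoly.dvd k z hy0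
  have hxd : 0 < x.natDegree := by
    rcases Nat.eq_zero_or_pos x.natDegree with h | h
    · obtain ⟨a, rfl⟩ := Polynomial.natDegree_eq_zero.mp h
      exact absurd ((Polynomial.isUnit_C).mpr (isUnit_iff_ne_zero.mpr
        (fun ha => hx0 (by rw [ha, map_zero])))) hxu
    · exact h
  have hle := Polynomial.natDegree_le_of_dvd hdvd (mul_ne_zero hx0 hc0)
  rw [hc, Polynomial.natDegree_mul (mul_ne_zero hx0 hx0) hc0,
    Polynomial.natDegree_mul hx0 hx0, Polynomial.natDegree_mul hx0 hc0] at hle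
  omega

/-- For a reduced finite-dimensional commutative algebra `R` over a perfect field `k`,
the minimal polynomial of the multiplication-by-`z` endomorphism is squarefree over an
algebraic closure of `k`. -/
theorem minpoly_mul_squarefree_over_closure
    (k R : Type*) [Field k] [PerfectField k] [CommRing R] [Algebra k R]
    [FiniteDimensional k R] [IsReduced R] (z : R) :
    Squarefree ((minpoly k ((Algebra.lmul k R) z : R →ₗ[k] R)).map
      (algebraMap k (AlgebraicClosure k))) := by
  have h1 : Function.Injective (Algebra.lmul k R) := fun a b h => by
    simpa using DFunLike.congr_fun h 1
  have h2 : minpoly k ((Algebra.lmul k R) z : R →ₗ[k] R) = minpoly k z :=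
    minpoly.algHom_eq (Algebra.lmul k R) h1 z
  rw [h2]
  have hsf : Squarefree (minpoly k z) := minpoly_squarefree_of_reduced k R z
  have hsep : (minpoly k z).Separable := (PerfectField.separable_iff_squarefree).mpr hsf
  exact (hsep.map).squarefree
end

section
/- Let δ ≥ 1 and w ≥ 1 be integers with binom(δ+1, 2) ≤ w, and set d = ⌊w/δ + (δ−1)/2⌋. Then d ≥ δ, and the quantity N = δ·(2d − δ + 3)/2 satisfies w < N ≤ 2w. -/
/-- If `binom(δ+1,2) ≤ w` and `d = ⌊w/δ + (δ-1)/2⌋`, then `d ≥ δ` and the dimension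
`N = δ(2d-δ+3)/2` satisfies `w < N ≤ 2w`. -/
theorem interp_dim_bounds_large (δ w : ℕ) (hδ : 1 ≤ δ) (hw : 1 ≤ w)
    (h : (δ + 1) * δ / 2 ≤ w) :
    let d : ℤ := ⌊(w : ℚ) / δ + ((δ : ℚ) - 1) / 2⌋
    let N : ℚ := δ * (2 * d - δ + 3) / 2
    (δ : ℤ) ≤ d ∧ (w : ℚ) < N ∧ N ≤ 2 * w := by
  intro d N
  have hδQ : (0 : ℚ) < δ := by exact_mod_cast hδ
  have hnat : (δ + 1) * δ ≤ 2 * w := by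
    have hdvd : 2 ∣ (δ + 1) * δ := by
      rw [mul_comm]; exact (Nat.even_mul_succ_self δ).two_dvd
    omega
  have key : ((δ : ℚ) + 1) * δ ≤ 2 * w := by exact_mod_cast hnat
  have hwδ : (w : ℚ) / δ * δ = w := div_mul_cancel₀ _ (ne_of_gt hδQ)
  have hx1 : (d : ℚ) ≤ (w : ℚ) / δ + ((δ : ℚ) - 1) / 2 := Int.floor_le _
  have hx2 : (w : ℚ) / δ + ((δ : ℚ) - 1) / 2 < d + 1 := Int.lt_floor_add_one _
  have hδd : (δ : ℤ) ≤ d := by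
    apply Int.le_floor.mpr
    push_cast
    nlinarith [hwδ, key, hδQ]
  refine ⟨hδd, ?_, ?_⟩
  · show (w : ℚ) < δ * (2 * d - δ + 3) / 2
    nlinarith [mul_lt_mul_of_pos_right hx2 hδQ, hwδ]
  · show (δ : ℚ) * (2 * d - δ + 3) / 2 ≤ 2 * w
    have h1 : (1 : ℚ) ≤ δ := by exact_mod_cast hδ
    nlinarith [mul_le_mul_of_nonneg_right hx1 (le_of_lt hδQ), hwδ, key, h1, hδQ,
      mul_le_mul_of_nonneg_right h1 (le_of_lt hδQ)]
end

section
/- Let k be a field, λ ∈ k, and χ, u, v ∈ k[S] polynomials with λ·u(S) + v(S) = S. Let I = ⟨χ(S), X − u(S), Y − v(S)⟩ ⊆ k[X, Y, S] and J = ⟨χ(λX+Y), X − u(λX+Y), Y − v(λX+Y)⟩ ⊆ k[X,Y]. Then I ∩ k[X,Y] = J. -/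
open MvPolynomial

/-- Elimination of the variable `S`: with variables `X = 0`, `Y = 1`, `S = 2`, if
`λ·u(S) + v(S) = S` then the elimination ideal of
`⟨χ(S), X - u(S), Y - v(S)⟩` with respect to `S` equals
`⟨χ(λX+Y), X - u(λX+Y), Y - v(λX+Y)⟩`. -/
theorem elimination_ideal_primitive_element
    (k : Type*) [Field k] (l : k) (χ u v : Polynomial k)
    (h : Polynomial.C l * u + v = Polynomial.X) :
    let ι : MvPolynomial (Fin 2) k →ₐ[k] MvPolynomial (Fin 3) k :=
      rename Fin.castSucc
    let S : MvPolynomial (Fin 3) k := X 2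
    let I : Ideal (MvPolynomial (Fin 3) k) :=
      Ideal.span {Polynomial.aeval S χ, X 0 - Polynomial.aeval S u,
        X 1 - Polynomial.aeval S v}
    let w : MvPolynomial (Fin 2) k := C l * X 0 + X 1
    let J : Ideal (MvPolynomial (Fin 2) k) :=
      Ideal.span {Polynomial.aeval w χ, X 0 - Polynomial.aeval w u,
        X 1 - Polynomial.aeval w v}
    Ideal.comap ι.toRingHom I = J := by
  intro ι S I w J
  set w' : MvPolynomial (Fin 3) k := C l * X 0 + X 1 with hw'def
  have hιw : ι w = w' := by simp [w, ι, hw'def]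
  -- generators of I are in I
  have h1 : Polynomial.aeval S χ ∈ I := Ideal.subset_span (by simp)
  have h2 : X 0 - Polynomial.aeval S u ∈ I := Ideal.subset_span (by simp)
  have h3 : X (1 : Fin 3) - Polynomial.aeval S v ∈ I := Ideal.subset_span (by simp)
  -- w' ≡ S mod I
  have hS : (C l : MvPolynomial (Fin 3) k) * Polynomial.aeval S u + Polynomial.aeval S v = S := by
    have := congrArg (Polynomial.aeval S) h
    simpa using this
  have hwS : w' - S ∈ I := by
    have heq : w' - S = C l * (X 0 - Polynomial.aeval S u)
        + (X (1 : Fin 3) - Polynomial.aeval S v) := by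
      rw [hw'def]; linear_combination hS
    rw [heq]
    exact Ideal.add_mem _ (Ideal.mul_mem_left _ _ h2) h3
  -- f(w') ≡ f(S) mod I for any univariate f
  have hmod : ∀ f : Polynomial k, Polynomial.aeval w' f - Polynomial.aeval S f ∈ I := by
    intro f
    have hdvd : w' - S ∣ Polynomial.aeval w' f - Polynomial.aeval S f := by
      rw [Polynomial.aeval_def, Polynomial.aeval_def, ← Polynomial.eval_map,
        ← Polynomial.eval_map]
      exact Polynomial.sub_dvd_eval_sub w' S _
    obtain ⟨c, hc⟩ := hdvd
    rw [hc]
    exact Ideal.mul_mem_right _ _ hwS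
  -- the projection π sending S ↦ w
  set π : MvPolynomial (Fin 3) k →ₐ[k] MvPolynomial (Fin 2) k :=
    aeval ![X 0, X 1, w] with hπdef
  have hπι : ∀ p : MvPolynomial (Fin 2) k, π (ι p) = p := by
    intro p
    have : (π.comp ι) = AlgHom.id k (MvPolynomial (Fin 2) k) := by
      apply MvPolynomial.algHom_ext
      intro i
      fin_cases i <;> simp [π, ι, w]
    calc π (ι p) = (π.comp ι) p := rfl
    _ = p := by rw [this]; rfl
  have hπS : π S = w := by simp [π, S]
  have hmapJ : Ideal.map π.toRingHom I ≤ J := by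
    rw [Ideal.map_le_iff_le_comap, Ideal.span_le]
    rintro q hq
    simp only [Set.mem_insert_iff, Set.mem_singleton_iff] at hq
    rcases hq with rfl | rfl | rfl <;>
      · show π _ ∈ J
        simp only [map_sub, ← Polynomial.aeval_algHom_apply, hπS]
        exact Ideal.subset_span (by simp [π])
  apply le_antisymm
  · intro p hp
    have : π (ι p) ∈ Ideal.map π.toRingHom I := Ideal.mem_map_of_mem _ hp
    rw [hπι p] at this
    exact hmapJ this
  · rw [Ideal.span_le]
    rintro q hq
    simp only [Set.mem_insert_iff, Set.mem_singleton_iff] at hq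
    show ι.toRingHom q ∈ I
    rcases hq with rfl | rfl | rfl
    · show ι (Polynomial.aeval w χ) ∈ I
      rw [← Polynomial.aeval_algHom_apply, hιw]
      have := I.add_mem (hmod χ) h1
      simpa using this
    · show ι (X 0 - Polynomial.aeval w u) ∈ I
      rw [map_sub, ← Polynomial.aeval_algHom_apply, hιw]
      have hx : ι (X 0) = X (0 : Fin 3) := by simp [ι]
      rw [hx]
      have := I.sub_mem h2 (I.sub_mem (I.add_mem (hmod u) h2) h2)
      -- X0 - aeval w' u = (X0 - aeval S u) - (aeval w' u - aeval S u)
      have heq : X (0 : Fin 3) - Polynomial.aeval w' u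
          = (X 0 - Polynomial.aeval S u) - (Polynomial.aeval w' u - Polynomial.aeval S u) := by
        ring
      rw [heq]
      exact I.sub_mem h2 (hmod u)
    · show ι (X 1 - Polynomial.aeval w v) ∈ I
      rw [map_sub, ← Polynomial.aeval_algHom_apply, hιw]
      have hx : ι (X 1) = X (1 : Fin 3) := by simp [ι]
      rw [hx]
      have heq : X (1 : Fin 3) - Polynomial.aeval w' v
          = (X 1 - Polynomial.aeval S v) - (Polynomial.aeval w' v - Polynomial.aeval S v) := by
        ring
      rw [heq]
      exact I.sub_mem h3 (hmod v)
end

section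
/- Let R be a Noetherian one-dimensional integral domain and I ⊆ R a nonzero ideal such that for every maximal ideal m containing I, the localization R_m is a discrete valuation ring. Then I admits a unique factorization I = ∏_{i=1}^{ℓ} m_i^{α_i} as a finite product of powers of pairwise distinct maximal ideals of R. -/
/-!
Localizing at a maximal ideal `n` turns every other maximal ideal into the unit ideal, so the
product `∏ mᵢ ^ αᵢ` of powers of distinct maximal ideals becomes `(n R_n) ^ α_n` in `R_n`. Since
ideals are determined by their localizations at maximal ideals, `I = ∏ mᵢ ^ αᵢ` holds exactly
when `I R_n = (n R_n) ^ α_n` for every maximal `n`. Away from `I` this forces `α_n = 0`; at the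
maximal ideals containing `I`, of which there are finitely many (they are minimal primes of `I`),
the DVR `R_n` supplies exactly one such exponent.
-/

open IsLocalRing

namespace IsDiscreteValuationRing

variable (A : Type*) [CommRing A] [IsDomain A] [IsDiscreteValuationRing A]

theorem pow_maximalIdeal_injective :
    Function.Injective (IsLocalRing.maximalIdeal A ^ · : ℕ → Ideal A) :=
  fun a b h => Nat.cast_injective (R := ℕ∞) <| by
    simpa only [coheight_pow_maximalIdeal] using congrArg Order.coheight h

theorem exists_eq_pow_maximalIdeal {J : Ideal A} (hJ : J ≠ ⊥) :
    ∃ a : ℕ, J = IsLocalRing.maximalIdeal A ^ a :=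
  exists_maximalIdeal_pow_eq_of_principal A (IsPrincipalIdealRing.principal _) J hJ

end IsDiscreteValuationRing

namespace Ideal

variable {R : Type*} [CommRing R]

theorem finite_setOf_isMaximal_le [IsNoetherianRing R] [Ring.DimensionLEOne R] {I : Ideal R}
    (hI : I ≠ ⊥) : {m : Ideal R | m.IsMaximal ∧ I ≤ m}.Finite :=
  (I.finite_minimalPrimes_of_isNoetherianRing R).subset fun _ ⟨hm, hIm⟩ =>
    ⟨⟨hm.isPrime, hIm⟩, fun _ hp hpm =>
      ((hp.1.isMaximal (ne_bot_of_le_ne_bot hI hp.2)).eq_of_le hm.ne_top hpm).ge⟩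

theorem map_finsuppProd_pow {S : Type*} [CommRing S] (φ : R →+* S) (f : Ideal R →₀ ℕ) :
    (f.prod fun m a => m ^ a).map φ = f.prod fun m a => m.map φ ^ a :=
  (map_finsuppProd (mapHom φ) f _).trans (by simp only [map_pow, mapHom_apply])

theorem map_finsuppProd_pow_atPrime (f : Ideal R →₀ ℕ) (hf : ∀ m ∈ f.support, m.IsMaximal)
    (n : Ideal R) [n.IsMaximal] :
    (f.prod fun m a => m ^ a).map (algebraMap R (Localization.AtPrime n)) =
      maximalIdeal (Localization.AtPrime n) ^ f n := by
  rw [map_finsuppProd_pow, Finsupp.prod, Finset.prod_eq_single n,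
    Localization.AtPrime.map_eq_maximalIdeal]
  · intro m hm hmn
    have hmn : ¬m ≤ n := fun hle => hmn ((hf m hm).eq_of_le ‹n.IsMaximal›.ne_top hle)
    rw [IsLocalization.AtPrime.map_eq_top_of_not_le _ hmn, ← one_eq_top, one_pow]
  · intro hn
    rw [Finsupp.notMem_support_iff.mp hn, pow_zero]

theorem eq_finsuppProd_pow_iff (I : Ideal R) {f : Ideal R →₀ ℕ}
    (hf : ∀ m ∈ f.support, m.IsMaximal) :
    I = (f.prod fun m a => m ^ a) ↔ ∀ (n : Ideal R) [n.IsMaximal],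
      I.map (algebraMap R (Localization.AtPrime n)) = maximalIdeal _ ^ f n := by
  refine ⟨fun h n _ => h ▸ map_finsuppProd_pow_atPrime f hf n, fun h => ?_⟩
  refine eq_of_localization_maximal fun n _ => ?_
  rw [h n, map_finsuppProd_pow_atPrime f hf n]

theorem le_of_map_atPrime_eq_pow {I n : Ideal R} [n.IsPrime] {a : ℕ}
    (h : I.map (algebraMap R (Localization.AtPrime n)) = maximalIdeal _ ^ a) (ha : a ≠ 0) :
    I ≤ n := by
  by_contra hIn
  rw [IsLocalization.AtPrime.map_eq_top_of_not_le _ hIn, eq_comm, pow_eq_top_iff] at h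
  exact h.elim (maximalIdeal.isMaximal _).ne_top ha

section LocallyDVR

variable [IsDomain R] {I : Ideal R}

theorem map_atPrime_ne_bot (n : Ideal R) [n.IsPrime] (hI : I ≠ ⊥) :
    I.map (algebraMap R (Localization.AtPrime n)) ≠ ⊥ :=
  (map_eq_bot_iff_of_injective
    (IsLocalization.injective _ n.primeCompl_le_nonZeroDivisors)).not.mpr hI

theorem exists_map_atPrime_eq_pow (n : Ideal R) [n.IsPrime] (hI : I ≠ ⊥)
    (hn : I ≤ n → IsDiscreteValuationRing (Localization.AtPrime n)) :
    ∃ a : ℕ, I.map (algebraMap R (Localization.AtPrime n)) = maximalIdeal _ ^ a := by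
  by_cases hIn : I ≤ n
  · have := hn hIn
    exact IsDiscreteValuationRing.exists_eq_pow_maximalIdeal _ (map_atPrime_ne_bot n hI)
  · exact ⟨0, by rw [pow_zero, one_eq_top, IsLocalization.AtPrime.map_eq_top_of_not_le _ hIn]⟩

theorem map_atPrime_eq_pow_injective (n : Ideal R) [n.IsPrime]
    (hn : I ≤ n → IsDiscreteValuationRing (Localization.AtPrime n)) {a b : ℕ}
    (ha : I.map (algebraMap R (Localization.AtPrime n)) = maximalIdeal _ ^ a)
    (hb : I.map (algebraMap R (Localization.AtPrime n)) = maximalIdeal _ ^ b) : a = b := by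
  by_cases hIn : I ≤ n
  · have := hn hIn
    exact IsDiscreteValuationRing.pow_maximalIdeal_injective _ (ha.symm.trans hb)
  · have eq_zero {c : ℕ}
        (hc : I.map (algebraMap R (Localization.AtPrime n)) = maximalIdeal _ ^ c) : c = 0 :=
      by_contra fun hc0 => hIn (le_of_map_atPrime_eq_pow hc hc0)
    rw [eq_zero ha, eq_zero hb]

theorem exists_finsupp_map_atPrime_eq_pow [IsNoetherianRing R] [Ring.DimensionLEOne R]
    (hI : I ≠ ⊥) (hloc : ∀ (n : Ideal R) [n.IsMaximal], I ≤ n →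
      IsDiscreteValuationRing (Localization.AtPrime n)) :
    ∃ f : Ideal R →₀ ℕ, (∀ m ∈ f.support, m.IsMaximal) ∧ ∀ (n : Ideal R) [n.IsMaximal],
      I.map (algebraMap R (Localization.AtPrime n)) = maximalIdeal _ ^ f n := by
  have exponent (n : Ideal R) : ∃ a : ℕ, (a ≠ 0 → n.IsMaximal ∧ I ≤ n) ∧ ∀ [n.IsMaximal],
      I.map (algebraMap R (Localization.AtPrime n)) = maximalIdeal _ ^ a := by
    by_cases hn : n.IsMaximal
    · obtain ⟨a, ha⟩ := exists_map_atPrime_eq_pow n hI (hloc n)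
      exact ⟨a, fun ha0 => ⟨hn, le_of_map_atPrime_eq_pow ha ha0⟩, ha⟩
    · exact ⟨0, fun h => (h rfl).elim, (hn ‹_›).elim⟩
  choose e he using exponent
  have hsupp : Function.support e ⊆ {m | m.IsMaximal ∧ I ≤ m} := fun n hn => (he n).1 hn
  exact ⟨Finsupp.ofSupportFinite e ((finite_setOf_isMaximal_le hI).subset hsupp),
    fun m hm => (hsupp (Finsupp.mem_support_iff.mp hm)).1, fun n _ => (he n).2⟩

end LocallyDVR

end Ideal

/-- In a Noetherian one-dimensional domain, a nonzero ideal whose localization at every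
maximal ideal containing it is a DVR factors uniquely as a finite product of powers of
pairwise distinct maximal ideals. -/
theorem unique_factorization_of_locally_dvr_ideal
    (R : Type*) [CommRing R] [IsDomain R] [IsNoetherianRing R] [Ring.DimensionLEOne R]
    (I : Ideal R) (hI : I ≠ ⊥)
    (hloc : ∀ (m : Ideal R) (hm : m.IsMaximal), I ≤ m →
      IsDiscreteValuationRing (@Localization.AtPrime R _ m hm.isPrime)) :
    ∃! f : Ideal R →₀ ℕ,
      (∀ m ∈ f.support, (m : Ideal R).IsMaximal) ∧
        I = f.prod (fun m a => m ^ a) := by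
  obtain ⟨f, hf, hfI⟩ := Ideal.exists_finsupp_map_atPrime_eq_pow hI hloc
  refine ⟨f, ⟨hf, (I.eq_finsuppProd_pow_iff hf).2 hfI⟩, fun g ⟨hg, hgI⟩ => ?_⟩
  ext n
  by_cases hn : n.IsMaximal
  · exact Ideal.map_atPrime_eq_pow_injective n (hloc n hn)
      ((I.eq_finsuppProd_pow_iff hg).1 hgI n) (hfI n)
  · rw [Finsupp.notMem_support_iff.mp (mt (hg n) hn),
      Finsupp.notMem_support_iff.mp (mt (hf n) hn)]
end
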